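/- Let u(t,x) = erfc(−x/√(2σ²t)) / ( erfc(−x/√(2σ²t)) + exp((t − 2x)/(2σ²))·(2 − erfc((t − x)/√(2σ²t))) ) for t > 0, x ∈ ℝ, σ > 0. Then V(t,x) = 1 − u(t,x) satisfies the viscous Burgers equation ∂V/∂t = (σ²/2)∂²V/∂x² − V·∂V/∂x on (0,∞) × ℝ. -/

import Mathlib

/-!
Write `N = erfc (-x / √(2σ²t))` and `M = exp ((t - 2x) / (2σ²)) * (2 - erfc ((t - x) / √(2σ²t)))`,
so that `V = 1 - u = M / (N + M)`. Both `N` and `M` solve the heat equation `∂ₜ = (σ²/2) ∂ₓ²`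
(`M` is the exponential tilt by `exp (λx + σ²λ²t/2)`, `λ = -1/σ²`, of the front `N (t, x - t)`),
and the Gaussian identity `exp ((t - 2x) / (2σ²)) * exp (-(t - x)² / (2σ²t)) = exp (-x² / (2σ²t))`
makes the Gaussian terms in `∂ₓ (N + M)` cancel: `∂ₓ (N + M) = -M / σ²`. Hence
`V = -σ² ∂ₓ log (N + M)` is the Cole–Hopf transform of a positive solution of the heat equation,
and therefore solves Burgers' equation.
-/

open Real MeasureTheory

/-- The complementary error function. -/
noncomputable def erfc (z : ℝ) : ℝ :=
  (2 / Real.sqrt π) * ∫ s in Set.Ioi z, Real.exp (-s ^ 2)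

lemma integrable_exp_neg_sq : Integrable fun s : ℝ => exp (-s ^ 2) := by
  simpa using integrable_exp_neg_mul_sq one_pos

lemma setIntegral_exp_neg_sq_pos {s : Set ℝ} (hs : volume s ≠ 0) :
    0 < ∫ x in s, exp (-x ^ 2) := by
  rw [setIntegral_pos_iff_support_of_nonneg_ae
    (Filter.Eventually.of_forall fun x => (exp_pos _).le) integrable_exp_neg_sq.integrableOn]
  simpa [Function.support, (exp_pos _).ne'] using pos_iff_ne_zero.2 hs

lemma erfc_pos (z : ℝ) : 0 < erfc z :=
  mul_pos (by positivity) (setIntegral_exp_neg_sq_pos (by simp))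

lemma erfc_lt_two (z : ℝ) : erfc z < 2 := by
  have hsplit := intervalIntegral.integral_Iic_add_Ioi (b := z)
    integrable_exp_neg_sq.integrableOn integrable_exp_neg_sq.integrableOn
  have htotal : ∫ s : ℝ, exp (-s ^ 2) = √π := by simpa using integral_gaussian 1
  have hIic := setIntegral_exp_neg_sq_pos (s := Set.Iic z) (by simp)
  have hpi : 0 < √π := sqrt_pos.2 pi_pos
  calc erfc z < 2 / √π * √π := by unfold erfc; gcongr; linarith
    _ = 2 := by field_simp

lemma hasDerivAt_erfc (z : ℝ) : HasDerivAt erfc (-(2 / √π * exp (-z ^ 2))) z := by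
  have hsplit : erfc = fun w =>
      2 / √π * ((∫ s in Set.Ioi 0, exp (-s ^ 2)) - ∫ s in (0 : ℝ)..w, exp (-s ^ 2)) := by
    funext w
    rw [← intervalIntegral.integral_Ioi_sub_Ioi' integrable_exp_neg_sq.integrableOn
      integrable_exp_neg_sq.integrableOn, sub_sub_cancel, erfc]
  have hFTC : HasDerivAt (fun w => ∫ s in (0 : ℝ)..w, exp (-s ^ 2)) (exp (-z ^ 2)) z :=
    intervalIntegral.integral_hasDerivAt_right integrable_exp_neg_sq.intervalIntegrable
      (Continuous.stronglyMeasurableAtFilter (by fun_prop) _ _) (by fun_prop)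
  rw [hsplit]
  exact ((hFTC.const_sub _).const_mul (2 / √π)).congr_deriv (by ring)

/-- Cole–Hopf: `φ` solves `∂ₜφ = (c/2) ∂ₓ²φ` and so does `m = -c ∂ₓφ`
(with `m₁ = ∂ₓm`, `m₂ = ∂ₓ²m`). -/
theorem burgers_of_coleHopf {c t x m₂ : ℝ} {φ m : ℝ → ℝ → ℝ} {m₁ : ℝ → ℝ} (hc : c ≠ 0)
    (hφ : ∀ ξ, φ t ξ ≠ 0)
    (hφx : ∀ ξ, HasDerivAt (φ t ·) (-m t ξ / c) ξ)
    (hmx : ∀ ξ, HasDerivAt (m t ·) (m₁ ξ) ξ)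
    (hm₁x : HasDerivAt m₁ m₂ x)
    (hφt : HasDerivAt (φ · x) (-m₁ x / 2) t)
    (hmt : HasDerivAt (m · x) (c / 2 * m₂) t) :
    let V : ℝ → ℝ → ℝ := fun τ ξ => m τ ξ / φ τ ξ
    deriv (fun τ => V τ x) t =
      c / 2 * deriv (deriv (fun ξ => V t ξ)) x - V t x * deriv (fun ξ => V t ξ) x := by
  intro V
  have hVx : deriv (fun ξ => V t ξ) =
      fun ξ => (m₁ ξ * φ t ξ - m t ξ * (-m t ξ / c)) / φ t ξ ^ 2 :=
    funext fun ξ => ((hmx ξ).div (hφx ξ) (hφ ξ)).deriv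
  have hVt : HasDerivAt (fun τ => V τ x) _ t := hmt.div hφt (hφ x)
  have hVxx : HasDerivAt (fun ξ => (m₁ ξ * φ t ξ - m t ξ * (-m t ξ / c)) / φ t ξ ^ 2) _ x :=
    ((hm₁x.mul (hφx x)).sub ((hmx x).mul ((hmx x).neg.div_const c))).div
      ((hφx x).pow 2) (pow_ne_zero 2 (hφ x))
  rw [hVt.deriv, hVx, hVxx.deriv]
  simp only [V, Pi.mul_apply, Pi.sub_apply, Pi.neg_apply]
  have hφ₀ := hφ x
  field_simp
  ring

noncomputable section

def erfcWave (c a t x : ℝ) : ℝ := erfc ((a * t - x) / √(2 * c * t))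

/-- Twice the density at `x` of the normal law with mean `a t` and variance `c t`. -/
def gaussKernel (c a t x : ℝ) : ℝ :=
  2 / √π * exp (-((a * t - x) / √(2 * c * t)) ^ 2) / √(2 * c * t)

def tiltedWave (c t x : ℝ) : ℝ := exp ((t - 2 * x) / (2 * c)) * (2 - erfcWave c 1 t x)

def heatPotential (c t x : ℝ) : ℝ := erfcWave c 0 t x + tiltedWave c t x

end

lemma heatPotential_pos (c t x : ℝ) : 0 < heatPotential c t x :=
  add_pos (erfc_pos _) (mul_pos (exp_pos _) (sub_pos.2 (erfc_lt_two _)))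

lemma one_sub_erfc_div_eq_tiltedWave_div (c t x : ℝ) :
    1 - erfc (-x / √(2 * c * t)) / (erfc (-x / √(2 * c * t)) +
      exp ((t - 2 * x) / (2 * c)) * (2 - erfc ((t - x) / √(2 * c * t)))) =
      tiltedWave c t x / heatPotential c t x := by
  have hφ := (heatPotential_pos c t x).ne'
  simp only [heatPotential, tiltedWave, erfcWave, zero_mul, zero_sub, one_mul] at hφ ⊢
  rw [one_sub_div hφ, add_sub_cancel_left]

section

variable {c t x : ℝ}

lemma hasDerivAt_erfcWave_x (a : ℝ) :
    HasDerivAt (erfcWave c a t ·) (gaussKernel c a t x) x := by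
  have hz : HasDerivAt (fun ξ => (a * t - ξ) / √(2 * c * t)) (-1 / √(2 * c * t)) x :=
    ((hasDerivAt_id x).const_sub _).div_const _
  exact ((hasDerivAt_erfc _).comp x hz).congr_deriv (by unfold gaussKernel; ring)

lemma hasDerivAt_erfcWave_t (hc : 0 < c) (ht : 0 < t) (a : ℝ) :
    HasDerivAt (erfcWave c a · x) (-((a * t + x) / (2 * t)) * gaussKernel c a t x) t := by
  have h2ct : 0 < 2 * c * t := by positivity
  have hs : HasDerivAt (fun τ => √(2 * c * τ)) (2 * c / (2 * √(2 * c * t))) t := by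
    simpa using ((hasDerivAt_id t).const_mul (2 * c)).sqrt h2ct.ne'
  have hz : HasDerivAt (fun τ => (a * τ - x) / √(2 * c * τ))
      ((a * √(2 * c * t) - (a * t - x) * (2 * c / (2 * √(2 * c * t)))) / √(2 * c * t) ^ 2) t := by
    have hlin : HasDerivAt (fun τ => a * τ - x) a t := by
      simpa using ((hasDerivAt_id t).const_mul a).sub_const x
    exact hlin.div hs (sqrt_pos.2 h2ct).ne'
  refine ((hasDerivAt_erfc _).comp t hz).congr_deriv ?_
  have hsq : √(2 * c * t) ^ 2 = 2 * c * t := sq_sqrt h2ct.le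
  have hs0 : √(2 * c * t) ≠ 0 := (sqrt_pos.2 h2ct).ne'
  unfold gaussKernel
  generalize exp (-((a * t - x) / √(2 * c * t)) ^ 2) = E
  generalize √(2 * c * t) = s at hsq hs0 ⊢
  field_simp
  linear_combination E * (x - a * t) * hsq

lemma hasDerivAt_gaussKernel_x (hc : 0 < c) (ht : 0 < t) (a : ℝ) :
    HasDerivAt (gaussKernel c a t ·) ((a * t - x) / (c * t) * gaussKernel c a t x) x := by
  have h2ct : 0 < 2 * c * t := by positivity
  have hz : HasDerivAt (fun ξ => -((a * t - ξ) / √(2 * c * t)) ^ 2)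
      (-(2 * ((a * t - x) / √(2 * c * t)) ^ 1 * (-1 / √(2 * c * t)))) x :=
    (((hasDerivAt_id x).const_sub _).div_const _ |>.pow 2).neg
  refine ((hz.exp.const_mul _).div_const _).congr_deriv ?_
  have hsq : √(2 * c * t) ^ 2 = 2 * c * t := sq_sqrt h2ct.le
  have hs0 : √(2 * c * t) ≠ 0 := (sqrt_pos.2 h2ct).ne'
  unfold gaussKernel
  generalize exp (-((a * t - x) / √(2 * c * t)) ^ 2) = E
  generalize √(2 * c * t) = s at hsq hs0 ⊢
  field_simp
  linear_combination E * (x - a * t) * hsq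

lemma exp_mul_gaussKernel_one (hc : 0 < c) (ht : 0 < t) :
    exp ((t - 2 * x) / (2 * c)) * gaussKernel c 1 t x = gaussKernel c 0 t x := by
  have hsq : √(2 * c * t) ^ 2 = 2 * c * t := sq_sqrt (by positivity)
  have hexponent : (t - 2 * x) / (2 * c) + -((1 * t - x) / √(2 * c * t)) ^ 2 =
      -((0 * t - x) / √(2 * c * t)) ^ 2 := by
    rw [div_pow, div_pow, hsq]
    field_simp
    ring
  unfold gaussKernel
  rw [← hexponent, exp_add]
  ring

lemma hasDerivAt_tiltedWave_x (hc : 0 < c) (ht : 0 < t) :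
    HasDerivAt (tiltedWave c t ·) (-tiltedWave c t x / c - gaussKernel c 0 t x) x := by
  have hE : HasDerivAt (fun ξ => exp ((t - 2 * ξ) / (2 * c)))
      (exp ((t - 2 * x) / (2 * c)) * (-(2 * 1) / (2 * c))) x :=
    (((hasDerivAt_id x).const_mul 2).const_sub t |>.div_const _).exp
  refine (hE.mul ((hasDerivAt_erfcWave_x 1).const_sub 2)).congr_deriv ?_
  rw [← exp_mul_gaussKernel_one hc ht]
  unfold tiltedWave
  field_simp
  ring

lemma hasDerivAt_tiltedWave_t (hc : 0 < c) (ht : 0 < t) :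
    HasDerivAt (tiltedWave c · x)
      (c / 2 * (tiltedWave c t x / c ^ 2 + (1 / c + x / (c * t)) * gaussKernel c 0 t x)) t := by
  have hE : HasDerivAt (fun τ => exp ((τ - 2 * x) / (2 * c)))
      (exp ((t - 2 * x) / (2 * c)) * (1 / (2 * c))) t :=
    (((hasDerivAt_id t).sub_const _).div_const _).exp
  refine (hE.mul ((hasDerivAt_erfcWave_t hc ht 1).const_sub 2)).congr_deriv ?_
  rw [← exp_mul_gaussKernel_one hc ht]
  unfold tiltedWave
  field_simp

lemma hasDerivAt_tiltedWave_xx (hc : 0 < c) (ht : 0 < t) :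
    HasDerivAt (fun ξ => -tiltedWave c t ξ / c - gaussKernel c 0 t ξ)
      (tiltedWave c t x / c ^ 2 + (1 / c + x / (c * t)) * gaussKernel c 0 t x) x := by
  refine ((hasDerivAt_tiltedWave_x hc ht).neg.div_const c |>.sub
    (hasDerivAt_gaussKernel_x hc ht 0)).congr_deriv ?_
  field_simp
  ring

lemma hasDerivAt_heatPotential_x (hc : 0 < c) (ht : 0 < t) :
    HasDerivAt (heatPotential c t ·) (-tiltedWave c t x / c) x :=
  ((hasDerivAt_erfcWave_x 0).add (hasDerivAt_tiltedWave_x hc ht)).congr_deriv (by ring)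

lemma hasDerivAt_heatPotential_t (hc : 0 < c) (ht : 0 < t) :
    HasDerivAt (heatPotential c · x) (-(-tiltedWave c t x / c - gaussKernel c 0 t x) / 2) t := by
  refine ((hasDerivAt_erfcWave_t hc ht 0).add (hasDerivAt_tiltedWave_t hc ht)).congr_deriv ?_
  field_simp
  ring

end

/-- The explicit formula `V = 1 - u` built from `erfc` solves the viscous
Burgers equation `∂V/∂t = (σ²/2) ∂²V/∂x² - V ∂V/∂x` on `(0,∞) × ℝ`. -/
theorem burgers_exact_solution (σ : ℝ) (hσ : 0 < σ) :
    let u : ℝ → ℝ → ℝ := fun t x =>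
      erfc (-x / Real.sqrt (2 * σ ^ 2 * t)) /
        (erfc (-x / Real.sqrt (2 * σ ^ 2 * t)) +
          Real.exp ((t - 2 * x) / (2 * σ ^ 2)) *
            (2 - erfc ((t - x) / Real.sqrt (2 * σ ^ 2 * t))))
    let V : ℝ → ℝ → ℝ := fun t x => 1 - u t x
    ∀ t x : ℝ, 0 < t →
      deriv (fun τ => V τ x) t =
        σ ^ 2 / 2 * deriv (deriv (fun ξ => V t ξ)) x -
          V t x * deriv (fun ξ => V t ξ) x := by
  intro u V t x ht
  have hc : 0 < σ ^ 2 := by positivity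
  have hV : V = fun τ ξ => tiltedWave (σ ^ 2) τ ξ / heatPotential (σ ^ 2) τ ξ :=
    funext₂ fun τ ξ => one_sub_erfc_div_eq_tiltedWave_div (σ ^ 2) τ ξ
  rw [hV]
  exact burgers_of_coleHopf hc.ne' (fun ξ => (heatPotential_pos _ t ξ).ne')
    (fun _ => hasDerivAt_heatPotential_x hc ht) (fun _ => hasDerivAt_tiltedWave_x hc ht)
    (hasDerivAt_tiltedWave_xx hc ht) (hasDerivAt_heatPotential_t hc ht)
    (hasDerivAt_tiltedWave_t hc ht)
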